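/- arXiv:2502.20548 — 3 statements merged into one kernel-verified Lean document; each statement's English description precedes it below -/
import Mathlib

section
/- Let p_L, p_R > 0 with p_L + p_R = 1. Define the Q♯ probability of selecting the left branch as g(η) = p_L·exp(0.1/η) / (p_L·exp(0.1/η) + p_R·(0.05·exp(1/η) + 0.95)). Then g(η) → 0 as η → 0⁺. -/
open Real Filter Topology

lemma exp_neg_div_tendsto (c : ℝ) (hc : 0 < c) :
    Tendsto (fun η : ℝ => Real.exp (-(c / η))) (𝓝[>] 0) (𝓝 0) := by
  have h1 : Tendsto (fun η : ℝ => c / η) (𝓝[>] 0) atTop := by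
    simpa [div_eq_mul_inv] using tendsto_inv_nhdsGT_zero.const_mul_atTop hc
  exact Real.tendsto_exp_atBot.comp (tendsto_neg_atTop_atBot.comp h1)

/-- Q♯'s probability of selecting the left sub-tree tends to 0 as η → 0⁺. -/
theorem qsharp_left_prob_tendsto_zero (pL pR : ℝ) (hL : 0 < pL) (hR : 0 < pR)
    (hsum : pL + pR = 1) :
    Tendsto (fun η : ℝ =>
        pL * Real.exp (0.1 / η)
          / (pL * Real.exp (0.1 / η) + pR * (0.05 * Real.exp (1 / η) + 0.95)))
      (𝓝[>] 0) (𝓝 0) := by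
  have key : ∀ η : ℝ, 0 < η →
      pL * Real.exp (0.1 / η)
          / (pL * Real.exp (0.1 / η) + pR * (0.05 * Real.exp (1 / η) + 0.95))
      = pL * Real.exp (-(0.9 / η))
          / (pL * Real.exp (-(0.9 / η)) + pR * (0.05 + 0.95 * Real.exp (-(1 / η)))) := by
    intro η hη
    have hs : (0:ℝ) < Real.exp (1 / η) := Real.exp_pos _
    have h1 : Real.exp (0.1 / η) = Real.exp (-(0.9 / η)) * Real.exp (1 / η) := by
      rw [← Real.exp_add]; congr 1; ring
    have h2 : Real.exp (-(1 / η)) = (Real.exp (1 / η))⁻¹ := Real.exp_neg _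
    rw [h1, h2]
    have ha : (0:ℝ) < Real.exp (-(0.9 / η)) := Real.exp_pos _
    rw [div_eq_div_iff (by positivity) (by positivity)]
    field_simp
  have hnum : Tendsto (fun η : ℝ => pL * Real.exp (-(0.9 / η))) (𝓝[>] 0) (𝓝 0) := by
    simpa using (exp_neg_div_tendsto 0.9 (by norm_num)).const_mul pL
  have hden : Tendsto (fun η : ℝ =>
      pL * Real.exp (-(0.9 / η)) + pR * (0.05 + 0.95 * Real.exp (-(1 / η))))
      (𝓝[>] 0) (𝓝 (pR * 0.05)) := by
    have h1 : Tendsto (fun η : ℝ => pR * (0.05 + 0.95 * Real.exp (-(1 / η))))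
        (𝓝[>] 0) (𝓝 (pR * 0.05)) := by
      have := ((exp_neg_div_tendsto 1 (by norm_num)).const_mul (0.95 : ℝ)).const_add (0.05 : ℝ)
      simpa using this.const_mul pR
    simpa using hnum.add h1
  have hlim : Tendsto (fun η : ℝ => pL * Real.exp (-(0.9 / η))
      / (pL * Real.exp (-(0.9 / η)) + pR * (0.05 + 0.95 * Real.exp (-(1 / η)))))
      (𝓝[>] 0) (𝓝 0) := by
    have := hnum.div hden (by positivity)
    rw [zero_div] at this; exact this
  refine hlim.congr' ?_
  filter_upwards [self_mem_nhdsWithin] with η hη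
  exact (key η hη).symm
end

section
/- Soft performance difference lemma: in a KL-regularized finite-horizon MDP, for any two policies π and π', V^{π,η} − V^{π',η} = Σ_{h=1}^H E_π[ Q^{π',η}_h(x_h, y_h) − E_{y∼π'_h(x_h)}[Q^{π',η}_h(x_h, y)] + η·KL(π'_h(x_h)‖π_ref_h(x_h)) − η·KL(π_h(x_h)‖π_ref_h(x_h)) ], where the outer expectation is over trajectories generated by π. -/
open Real Finset

/-- Soft performance difference lemma for KL-regularized finite-horizon MDPs.
`Vpol ρ` is the KL-regularized value-to-go of policy `ρ` (via its backward
recursion), `d h x` is the state-occupancy of policy `π` at step `h` started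
from `x1`, and the right-hand side is the sum over steps of the expectation,
under trajectories of `π`, of the advantage-plus-KL terms of `π'`. -/
theorem soft_performance_difference
    {X Y : Type*} [Fintype X] [Fintype Y] [Nonempty X] [Nonempty Y]
    [DecidableEq X]
    (H : ℕ) (T : ℕ → X → Y → X → ℝ)
    (hT0 : ∀ h x y x', 0 ≤ T h x y x') (hT1 : ∀ h x y, ∑ x', T h x y x' = 1)
    (r : ℕ → X → Y → ℝ)
    (pref : ℕ → X → Y → ℝ)
    (hpos : ∀ h x y, 0 < pref h x y) (hsum : ∀ h x, ∑ y, pref h x y = 1)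
    (η : ℝ) (hη : 0 < η)
    (Vpol : (ℕ → X → Y → ℝ) → ℕ → X → ℝ)
    (hVpolH : ∀ ρ x, Vpol ρ H x = 0)
    (hVpolRec : ∀ ρ : ℕ → X → Y → ℝ, ∀ h < H, ∀ x,
      Vpol ρ h x = (∑ y, ρ h x y *
          (r h x y + ∑ x', T h x y x' * Vpol ρ (h + 1) x'))
        - η * ∑ y, ρ h x y * Real.log (ρ h x y / pref h x y))
    (pi pi' : ℕ → X → Y → ℝ)
    (hpi0 : ∀ h x y, 0 ≤ pi h x y) (hpi1 : ∀ h x, ∑ y, pi h x y = 1)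
    (hpi'0 : ∀ h x y, 0 < pi' h x y) (hpi'1 : ∀ h x, ∑ y, pi' h x y = 1)
    (x1 : X)
    (d : ℕ → X → ℝ)
    (hd0 : ∀ x, d 0 x = if x = x1 then 1 else 0)
    (hdrec : ∀ h x', d (h + 1) x' = ∑ x, ∑ y, d h x * pi h x y * T h x y x')
    (Qpol : (ℕ → X → Y → ℝ) → ℕ → X → Y → ℝ)
    (hQpol : ∀ ρ h x y,
      Qpol ρ h x y = r h x y + ∑ x', T h x y x' * Vpol ρ (h + 1) x') :
    Vpol pi 0 x1 - Vpol pi' 0 x1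
      = ∑ h ∈ Finset.range H, ∑ x, d h x *
          ((∑ y, pi h x y * Qpol pi' h x y)
            - (∑ y, pi' h x y * Qpol pi' h x y)
            + η * ∑ y, pi' h x y * Real.log (pi' h x y / pref h x y)
            - η * ∑ y, pi h x y * Real.log (pi h x y / pref h x y)) := by

  set f : ℕ → ℝ := fun h => ∑ x, d h x * (Vpol pi h x - Vpol pi' h x) with hf
  have hfH : f H = 0 := by simp [hf, hVpolH]
  have hf0 : f 0 = Vpol pi 0 x1 - Vpol pi' 0 x1 := by
    simp [hf, hd0, ite_mul]
  have key : ∀ h ∈ Finset.range H,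
      f h - f (h + 1) = ∑ x, d h x *
          ((∑ y, pi h x y * Qpol pi' h x y)
            - (∑ y, pi' h x y * Qpol pi' h x y)
            + η * ∑ y, pi' h x y * Real.log (pi' h x y / pref h x y)
            - η * ∑ y, pi h x y * Real.log (pi h x y / pref h x y)) := by
    intro h hh
    rw [Finset.mem_range] at hh
    have hstep : f (h + 1) = ∑ x, ∑ y, ∑ x',
        d h x * pi h x y * T h x y x' *
          (Vpol pi (h + 1) x' - Vpol pi' (h + 1) x') := by
      simp only [hf, hdrec, Finset.sum_mul]
      rw [Finset.sum_comm]
      refine Finset.sum_congr rfl fun x _ => ?_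
      rw [Finset.sum_comm]
    rw [hstep, hf]
    simp only [← Finset.sum_sub_distrib]
    refine Finset.sum_congr rfl fun x _ => ?_
    rw [hVpolRec pi h hh x, hVpolRec pi' h hh x]
    have h1 : ∑ y, pi' h x y * (r h x y + ∑ x', T h x y x' * Vpol pi' (h + 1) x')
        = ∑ y, pi' h x y * Qpol pi' h x y := by
      simp [hQpol]
    have h2 : d h x * ∑ y, pi h x y * (r h x y + ∑ x', T h x y x' * Vpol pi (h + 1) x')
        - ∑ y, ∑ x', d h x * pi h x y * T h x y x' *
            (Vpol pi (h + 1) x' - Vpol pi' (h + 1) x')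
        = d h x * ∑ y, pi h x y * Qpol pi' h x y := by
      rw [Finset.mul_sum, Finset.mul_sum, ← Finset.sum_sub_distrib]
      refine Finset.sum_congr rfl fun y _ => ?_
      rw [hQpol]
      have h3 : ∑ x', d h x * pi h x y * T h x y x' *
            (Vpol pi (h + 1) x' - Vpol pi' (h + 1) x')
          = d h x * pi h x y * ((∑ x', T h x y x' * Vpol pi (h + 1) x')
            - ∑ x', T h x y x' * Vpol pi' (h + 1) x') := by
        rw [← Finset.sum_sub_distrib, Finset.mul_sum]
        exact Finset.sum_congr rfl fun _ _ => by ring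
      rw [h3]; ring
    have h4 : ∑ y, (pi h x y * Qpol pi' h x y - pi' h x y * Qpol pi' h x y)
        = (∑ y, pi h x y * Qpol pi' h x y) - ∑ y, pi' h x y * Qpol pi' h x y :=
      Finset.sum_sub_distrib _ _
    linear_combination h2 - d h x * h1 - d h x * h4
  calc Vpol pi 0 x1 - Vpol pi' 0 x1 = f 0 - f H := by rw [hf0, hfH]; ring
    _ = ∑ h ∈ Finset.range H, (f h - f (h + 1)) := (Finset.sum_range_sub' f H).symm
    _ = _ := Finset.sum_congr rfl key
end

section
/- Log-sum-exp second-order perturbation bound: for any two finitely supported probability distributions p, q on [a, b], |ln Σ_z p(z)e^z − ln Σ_z q(z)e^z| ≤ C·(1 + b − a)·( (sqrt(Var_q(e^z))/E_q[e^z])·H(p,q) + ((e^b − e^a)/E_q[e^z])·H²(p,q) ) for a universal constant C. -/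
open Real Finset


set_option maxHeartbeats 1000000 in
private lemma log_sum_exp_aux (P Q S Hh H2 E ea eb t r sP sQ lgP lgQ : ℝ)
    (hQ0 : 0 < Q) (hP0 : 0 < P) (hS0 : 0 ≤ S) (hHh0 : 0 ≤ Hh) (hH20 : 0 ≤ H2)
    (hE0 : 0 ≤ E) (ht0 : 0 ≤ t) (hr0 : 0 ≤ r) (hr2 : r ≤ 2)
    (hea : 0 < ea) (hQb : Q ≤ eb) (hEdef : E = eb - ea) (hexp : (t + 1) * ea ≤ eb)
    (hsP : sP ^ 2 = P) (hsQ : sQ ^ 2 = Q) (hsP0 : 0 ≤ sP) (hsQ0 : 0 ≤ sQ)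
    (hkey1 : |P - Q| ≤ 2 * (r * Hh * S) + 2 * H2 * E)
    (hkey2 : Q * (1 - H2) - r * Hh * S ≤ sP * sQ)
    (hlt : |lgP - lgQ| ≤ t)
    (hd1 : lgP - lgQ ≤ (P - Q) / Q) (hd2 : lgQ - lgP ≤ (Q - P) / P) :
    |lgP - lgQ| ≤ 16 * (1 + t) * (S * Hh + E * H2) / Q := by
  have h1t0 : (0:ℝ) ≤ 1 + t := by linarith
  by_cases hcase : r * Hh * S + H2 * Q ≤ Q / 2
  · -- near case: P ≥ Q/4 and we use |lgP - lgQ| ≤ 4|P-Q|/Q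
    have hPQ4 : Q ≤ 4 * P := by
      have h1 : Q / 2 ≤ sP * sQ := by linarith
      have msq := mul_self_le_mul_self (by positivity : (0:ℝ) ≤ Q / 2) h1
      have hPQ : sP ^ 2 * sQ ^ 2 = P * Q := by rw [hsP, hsQ]
      nlinarith [msq, hPQ, hQ0]
    have habs : |lgP - lgQ| ≤ 4 * |P - Q| / Q := by
      rw [abs_le]
      constructor
      · have h1 : (Q - P) / P ≤ 4 * |P - Q| / Q := by
          rw [div_le_div_iff₀ hP0 hQ0]
          have h2 : Q - P ≤ |P - Q| := by rw [abs_sub_comm]; exact le_abs_self _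
          nlinarith [abs_nonneg (P - Q), hP0.le, hQ0.le]
        linarith
      · have h1 : (P - Q) / Q ≤ 4 * |P - Q| / Q := by
          rw [div_le_div_iff₀ hQ0 hQ0]
          nlinarith [le_abs_self (P - Q), hQ0.le, abs_nonneg (P - Q)]
        linarith
    refine habs.trans ?_
    have h4 : 4 * |P - Q| ≤ 16 * (1 + t) * (S * Hh + E * H2) := by
      nlinarith [hkey1, mul_nonneg hE0 hH20, mul_nonneg (mul_nonneg hS0 hHh0) ht0,
        mul_nonneg (mul_nonneg hE0 hH20) ht0,
        mul_nonneg (mul_nonneg hHh0 hS0) (sub_nonneg.2 hr2)]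
    rw [div_le_div_iff₀ hQ0 hQ0]
    nlinarith [mul_nonneg (sub_nonneg.2 h4) hQ0.le]
  · -- far case: |lgP - lgQ| ≤ t
    push_neg at hcase
    refine hlt.trans ?_
    rw [le_div_iff₀ hQ0]
    rcases le_or_gt (1/4 : ℝ) H2 with hH2big | hH2small
    · have h1 : t * Q ≤ t * eb := mul_le_mul_of_nonneg_left hQb ht0
      have h2 : t * eb ≤ (1 + t) * E := by nlinarith [hexp]
      have h3 : (1 + t) * E ≤ 16 * (1 + t) * (S * Hh + E * H2) := by
        nlinarith [mul_nonneg (mul_nonneg h1t0 hE0) (by linarith : (0:ℝ) ≤ 16 * H2 - 1),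
          mul_nonneg (mul_nonneg h1t0 hS0) hHh0]
      linarith
    · have h1 : Q / 4 < r * Hh * S := by
        nlinarith [mul_nonneg (by linarith : (0:ℝ) ≤ 1/4 - H2) hQ0.le]
      have h2 : Q / 8 ≤ Hh * S := by
        nlinarith [mul_nonneg (mul_nonneg hHh0 hS0) (sub_nonneg.2 hr2)]
      nlinarith [mul_nonneg h1t0 (by linarith : (0:ℝ) ≤ Hh * S - Q / 8),
        mul_nonneg (mul_nonneg h1t0 hE0) hH20,
        mul_nonneg ht0 hQ0.le, hQ0.le]

set_option maxHeartbeats 1000000 in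
/-- Log-sum-exp second-order perturbation bound: there is a universal constant
`C` such that for any two finitely supported distributions `p, q` on points of
`[a,b]`,
`|ln Σ p(z)eᶻ − ln Σ q(z)eᶻ| ≤ C (1+b−a) ((√Var_q(eᶻ)/E_q[eᶻ]) H(p,q) + ((e^b−e^a)/E_q[eᶻ]) H²(p,q))`. -/
theorem log_sum_exp_second_order :
    ∃ C : ℝ, 0 < C ∧
      ∀ (ι : Type) (_ : Fintype ι) (a b : ℝ) (z p q : ι → ℝ),
        a ≤ b →
        (∀ i, z i ∈ Set.Icc a b) →
        (∀ i, 0 ≤ p i) → (∑ i, p i = 1) →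
        (∀ i, 0 ≤ q i) → (∑ i, q i = 1) →
        |Real.log (∑ i, p i * Real.exp (z i))
            - Real.log (∑ i, q i * Real.exp (z i))|
          ≤ C * (1 + b - a) *
            ((Real.sqrt (∑ i, q i *
                  (Real.exp (z i) - ∑ j, q j * Real.exp (z j)) ^ 2)
                / (∑ i, q i * Real.exp (z i)))
                * Real.sqrt ((1:ℝ)/2 * ∑ i, (Real.sqrt (p i) - Real.sqrt (q i)) ^ 2)
              + ((Real.exp b - Real.exp a) / ∑ i, q i * Real.exp (z i))
                * ((1:ℝ)/2 * ∑ i, (Real.sqrt (p i) - Real.sqrt (q i)) ^ 2)) := by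
  refine ⟨16, by norm_num, ?_⟩
  intro ι _ a b z p q hab hz hp0 hp1 hq0 hq1
  set Q : ℝ := ∑ i, q i * Real.exp (z i) with hQdef
  set P : ℝ := ∑ i, p i * Real.exp (z i) with hPdef
  set V : ℝ := ∑ i, q i * (Real.exp (z i) - Q) ^ 2 with hVdef
  set H2 : ℝ := (1:ℝ)/2 * ∑ i, (Real.sqrt (p i) - Real.sqrt (q i)) ^ 2 with hH2def
  set S : ℝ := Real.sqrt V with hSdef
  set Hh : ℝ := Real.sqrt H2 with hHhdef
  set E : ℝ := Real.exp b - Real.exp a with hEdef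
  -- basic positivity facts
  have hE0 : 0 ≤ E := by
    have := Real.exp_le_exp.2 hab; simp only [hEdef]; linarith
  have hQa : Real.exp a ≤ Q := by
    rw [hQdef]
    calc Real.exp a = ∑ i, q i * Real.exp a := by rw [← Finset.sum_mul, hq1, one_mul]
      _ ≤ ∑ i, q i * Real.exp (z i) :=
        Finset.sum_le_sum fun i _ =>
          mul_le_mul_of_nonneg_left (Real.exp_le_exp.2 (hz i).1) (hq0 i)
  have hQb : Q ≤ Real.exp b := by
    rw [hQdef]
    calc ∑ i, q i * Real.exp (z i) ≤ ∑ i, q i * Real.exp b :=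
        Finset.sum_le_sum fun i _ =>
          mul_le_mul_of_nonneg_left (Real.exp_le_exp.2 (hz i).2) (hq0 i)
      _ = Real.exp b := by rw [← Finset.sum_mul, hq1, one_mul]
  have hPa : Real.exp a ≤ P := by
    rw [hPdef]
    calc Real.exp a = ∑ i, p i * Real.exp a := by rw [← Finset.sum_mul, hp1, one_mul]
      _ ≤ ∑ i, p i * Real.exp (z i) :=
        Finset.sum_le_sum fun i _ =>
          mul_le_mul_of_nonneg_left (Real.exp_le_exp.2 (hz i).1) (hp0 i)
  have hPb : P ≤ Real.exp b := by
    rw [hPdef]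
    calc ∑ i, p i * Real.exp (z i) ≤ ∑ i, p i * Real.exp b :=
        Finset.sum_le_sum fun i _ =>
          mul_le_mul_of_nonneg_left (Real.exp_le_exp.2 (hz i).2) (hp0 i)
      _ = Real.exp b := by rw [← Finset.sum_mul, hp1, one_mul]
  have hQ0 : 0 < Q := lt_of_lt_of_le (Real.exp_pos a) hQa
  have hP0 : 0 < P := lt_of_lt_of_le (Real.exp_pos a) hPa
  have hV0 : 0 ≤ V := Finset.sum_nonneg fun i _ => mul_nonneg (hq0 i) (sq_nonneg _)
  have hH20 : 0 ≤ H2 := by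
    rw [hH2def]
    exact mul_nonneg (by norm_num) (Finset.sum_nonneg fun i _ => sq_nonneg _)
  have hS0 : 0 ≤ S := Real.sqrt_nonneg _
  have hHh0 : 0 ≤ Hh := Real.sqrt_nonneg _
  have hS2 : S ^ 2 = V := Real.sq_sqrt hV0
  have hHh2 : Hh ^ 2 = H2 := Real.sq_sqrt hH20
  have ht0 : 0 ≤ b - a := sub_nonneg.2 hab
  -- |e^{z i} - Q| ≤ E
  have hzQ : ∀ i, |Real.exp (z i) - Q| ≤ E := by
    intro i
    have h1 : Real.exp a ≤ Real.exp (z i) := Real.exp_le_exp.2 (hz i).1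
    have h2 : Real.exp (z i) ≤ Real.exp b := Real.exp_le_exp.2 (hz i).2
    rw [abs_le]; constructor <;> simp only [hEdef] <;> linarith
  -- sum of squares of sqrt differences
  have hsumsq : ∑ i, (Real.sqrt (p i) - Real.sqrt (q i)) ^ 2 = 2 * H2 := by
    rw [hH2def]; ring
  -- Cauchy-Schwarz bound on the cross term
  have hterm1 : |∑ i, (Real.sqrt (p i) - Real.sqrt (q i)) *
      (Real.sqrt (q i) * (Real.exp (z i) - Q))| ≤ Real.sqrt 2 * Hh * S := by
    have hcs := Finset.sum_mul_sq_le_sq_mul_sq Finset.univ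
      (fun i => Real.sqrt (p i) - Real.sqrt (q i))
      (fun i => Real.sqrt (q i) * (Real.exp (z i) - Q))
    have hg2 : ∑ i, (Real.sqrt (q i) * (Real.exp (z i) - Q)) ^ 2 = V := by
      rw [hVdef]
      refine Finset.sum_congr rfl fun i _ => ?_
      rw [mul_pow, Real.sq_sqrt (hq0 i)]
    rw [hg2, hsumsq] at hcs
    have hrhs : (Real.sqrt 2 * Hh * S) ^ 2 = 2 * H2 * V := by
      rw [mul_pow, mul_pow, hS2, hHh2, Real.sq_sqrt (by norm_num : (0:ℝ) ≤ 2)]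
    rw [← Real.sqrt_sq_eq_abs]
    rw [show Real.sqrt 2 * Hh * S = Real.sqrt ((Real.sqrt 2 * Hh * S) ^ 2) from
      (Real.sqrt_sq (by positivity)).symm]
    apply Real.sqrt_le_sqrt
    rw [hrhs]; exact hcs
  -- bound on the quadratic term
  have hterm2 : |∑ i, (Real.sqrt (p i) - Real.sqrt (q i)) ^ 2 * (Real.exp (z i) - Q)|
      ≤ 2 * H2 * E := by
    calc |∑ i, (Real.sqrt (p i) - Real.sqrt (q i)) ^ 2 * (Real.exp (z i) - Q)|
        ≤ ∑ i, |(Real.sqrt (p i) - Real.sqrt (q i)) ^ 2 * (Real.exp (z i) - Q)| :=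
          Finset.abs_sum_le_sum_abs _ _
      _ ≤ ∑ i, (Real.sqrt (p i) - Real.sqrt (q i)) ^ 2 * E := by
          refine Finset.sum_le_sum fun i _ => ?_
          rw [abs_mul, abs_of_nonneg (sq_nonneg _)]
          exact mul_le_mul_of_nonneg_left (hzQ i) (sq_nonneg _)
      _ = 2 * H2 * E := by rw [← Finset.sum_mul, hsumsq]
  -- key bound |P - Q| ≤ 2√2 Hh S + 2 H2 E
  have hsum : ∑ i, (p i - q i) * (Real.exp (z i) - Q) = P - Q := by
    have h1 : ∀ i ∈ univ, (p i - q i) * (Real.exp (z i) - Q)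
        = p i * Real.exp (z i) - q i * Real.exp (z i) - (p i * Q - q i * Q) :=
      fun i _ => by ring
    rw [Finset.sum_congr rfl h1]
    simp_rw [Finset.sum_sub_distrib, ← Finset.sum_mul, hp1, hq1]
    rw [hPdef, hQdef]; ring
  have hdecomp : P - Q = 2 * (∑ i, (Real.sqrt (p i) - Real.sqrt (q i)) *
      (Real.sqrt (q i) * (Real.exp (z i) - Q)))
      + ∑ i, (Real.sqrt (p i) - Real.sqrt (q i)) ^ 2 * (Real.exp (z i) - Q) := by
    rw [← hsum, Finset.mul_sum, ← Finset.sum_add_distrib]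
    refine Finset.sum_congr rfl fun i _ => ?_
    linear_combination (Q - Real.exp (z i)) * Real.sq_sqrt (hp0 i)
      - (Q - Real.exp (z i)) * Real.sq_sqrt (hq0 i)
  have hkey1 : |P - Q| ≤ 2 * (Real.sqrt 2 * Hh * S) + 2 * H2 * E := by
    rw [hdecomp]
    calc |2 * (∑ i, (Real.sqrt (p i) - Real.sqrt (q i)) *
          (Real.sqrt (q i) * (Real.exp (z i) - Q)))
        + ∑ i, (Real.sqrt (p i) - Real.sqrt (q i)) ^ 2 * (Real.exp (z i) - Q)|
        ≤ |2 * (∑ i, (Real.sqrt (p i) - Real.sqrt (q i)) *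
          (Real.sqrt (q i) * (Real.exp (z i) - Q)))|
        + |∑ i, (Real.sqrt (p i) - Real.sqrt (q i)) ^ 2 * (Real.exp (z i) - Q)| :=
          abs_add_le _ _
      _ ≤ 2 * (Real.sqrt 2 * Hh * S) + 2 * H2 * E := by
          rw [abs_mul, abs_of_nonneg (by norm_num : (0:ℝ) ≤ 2)]
          have := hterm1; have := hterm2; linarith
  -- key lower bound on √P √Q
  have hBC : ∑ i, Real.sqrt (p i) * Real.sqrt (q i) * Real.exp (z i)
      ≤ Real.sqrt P * Real.sqrt Q := by
    have h := Real.sum_mul_le_sqrt_mul_sqrt Finset.univ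
      (fun i => Real.sqrt (p i) * Real.sqrt (Real.exp (z i)))
      (fun i => Real.sqrt (q i) * Real.sqrt (Real.exp (z i)))
    have h1 : ∀ i ∈ univ, Real.sqrt (p i) * Real.sqrt (Real.exp (z i)) *
        (Real.sqrt (q i) * Real.sqrt (Real.exp (z i)))
        = Real.sqrt (p i) * Real.sqrt (q i) * Real.exp (z i) := by
      intro i _
      linear_combination (Real.sqrt (p i) * Real.sqrt (q i)) *
        Real.mul_self_sqrt (Real.exp_nonneg (z i))
    have h2 : ∀ i ∈ univ, (Real.sqrt (p i) * Real.sqrt (Real.exp (z i))) ^ 2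
        = p i * Real.exp (z i) := by
      intro i _
      rw [mul_pow, Real.sq_sqrt (hp0 i), Real.sq_sqrt (Real.exp_nonneg _)]
    have h3 : ∀ i ∈ univ, (Real.sqrt (q i) * Real.sqrt (Real.exp (z i))) ^ 2
        = q i * Real.exp (z i) := by
      intro i _
      rw [mul_pow, Real.sq_sqrt (hq0 i), Real.sq_sqrt (Real.exp_nonneg _)]
    rw [Finset.sum_congr rfl h1, Finset.sum_congr rfl h2, Finset.sum_congr rfl h3] at h
    exact h
  have hBsum : ∑ i, Real.sqrt (p i) * Real.sqrt (q i) = 1 - H2 := by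
    have h1 : ∀ i ∈ univ, (Real.sqrt (p i) - Real.sqrt (q i)) ^ 2
        = p i + q i - 2 * (Real.sqrt (p i) * Real.sqrt (q i)) := by
      intro i _
      linear_combination Real.sq_sqrt (hp0 i) + Real.sq_sqrt (hq0 i)
    have h2 : ∑ i, (Real.sqrt (p i) - Real.sqrt (q i)) ^ 2
        = 2 - 2 * ∑ i, Real.sqrt (p i) * Real.sqrt (q i) := by
      rw [Finset.sum_congr rfl h1]
      simp_rw [Finset.sum_sub_distrib, Finset.sum_add_distrib, ← Finset.mul_sum, hp1, hq1]
      ring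
    have := hsumsq
    rw [h2] at this
    linarith
  have hid2 : ∑ i, (Real.sqrt (p i) - Real.sqrt (q i)) *
      (Real.sqrt (q i) * (Real.exp (z i) - Q))
      = (∑ i, Real.sqrt (p i) * Real.sqrt (q i) * Real.exp (z i)) - Q * (1 - H2) := by
    have h1 : ∀ i ∈ univ, (Real.sqrt (p i) - Real.sqrt (q i)) *
        (Real.sqrt (q i) * (Real.exp (z i) - Q))
        = Real.sqrt (p i) * Real.sqrt (q i) * Real.exp (z i)
          - Q * (Real.sqrt (p i) * Real.sqrt (q i))
          - (q i * Real.exp (z i) - Q * q i) := by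
      intro i _
      linear_combination (Q - Real.exp (z i)) * Real.sq_sqrt (hq0 i)
    rw [Finset.sum_congr rfl h1]
    simp_rw [Finset.sum_sub_distrib, ← Finset.mul_sum, hBsum, hq1]
    rw [← hQdef]; ring
  have hkey2 : Q * (1 - H2) - Real.sqrt 2 * Hh * S ≤ Real.sqrt P * Real.sqrt Q := by
    have hlow : -(Real.sqrt 2 * Hh * S) ≤ ∑ i, (Real.sqrt (p i) - Real.sqrt (q i)) *
        (Real.sqrt (q i) * (Real.exp (z i) - Q)) := by
      have := neg_abs_le (∑ i, (Real.sqrt (p i) - Real.sqrt (q i)) *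
        (Real.sqrt (q i) * (Real.exp (z i) - Q)))
      linarith [hterm1]
    have := hid2
    nlinarith [hBC]
  -- log bounds
  have hlogPa : a ≤ Real.log P := (Real.le_log_iff_exp_le hP0).2 hPa
  have hlogPb : Real.log P ≤ b := (Real.log_le_iff_le_exp hP0).2 hPb
  have hlogQa : a ≤ Real.log Q := (Real.le_log_iff_exp_le hQ0).2 hQa
  have hlogQb : Real.log Q ≤ b := (Real.log_le_iff_le_exp hQ0).2 hQb
  -- rewrite the target's RHS
  have hrw : (16:ℝ) * (1 + b - a) * (S / Q * Hh + E / Q * H2)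
      = 16 * (1 + b - a) * (S * Hh + E * H2) / Q := by ring
  clear_value Q P V H2 S Hh E
  have hd1 : Real.log P - Real.log Q ≤ (P - Q) / Q := by
    rw [← Real.log_div hP0.ne' hQ0.ne']
    have h := Real.log_le_sub_one_of_pos (div_pos hP0 hQ0)
    have heq : (P - Q) / Q = P / Q - 1 := by field_simp
    linarith
  have hd2 : Real.log Q - Real.log P ≤ (Q - P) / P := by
    rw [← Real.log_div hQ0.ne' hP0.ne']
    have h := Real.log_le_sub_one_of_pos (div_pos hQ0 hP0)
    have heq : (Q - P) / P = Q / P - 1 := by field_simp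
    linarith
  have hlt : |Real.log P - Real.log Q| ≤ b - a := by
    rw [abs_le]; constructor <;> linarith
  have hexp : ((b - a) + 1) * Real.exp a ≤ Real.exp b := by
    have h := Real.add_one_le_exp (b - a)
    have h2 : Real.exp (b - a) * Real.exp a = Real.exp b := by
      rw [← Real.exp_add]; ring_nf
    nlinarith [mul_nonneg (sub_nonneg.2 h) (Real.exp_pos a).le]
  have hsqrt2a : (0:ℝ) ≤ Real.sqrt 2 := Real.sqrt_nonneg 2
  have hsqrt2b : Real.sqrt 2 ≤ 2 := by
    nlinarith [Real.sq_sqrt (by norm_num : (0:ℝ) ≤ 2), Real.sqrt_nonneg 2]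
  have hmain := log_sum_exp_aux P Q S Hh H2 E (Real.exp a) (Real.exp b) (b - a)
    (Real.sqrt 2) (Real.sqrt P) (Real.sqrt Q) (Real.log P) (Real.log Q)
    hQ0 hP0 hS0 hHh0 hH20 hE0 ht0 hsqrt2a hsqrt2b (Real.exp_pos a) hQb hEdef hexp
    (Real.sq_sqrt hP0.le) (Real.sq_sqrt hQ0.le) (Real.sqrt_nonneg P) (Real.sqrt_nonneg Q)
    hkey1 hkey2 hlt hd1 hd2
  have h17 : (1:ℝ) + b - a = 1 + (b - a) := by ring
  rw [hrw, h17]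
  exact hmain
end
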